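/- arXiv:2403.17613 — 5 statements merged into one kernel-verified Lean document; each statement's English description precedes it below -/
import Mathlib

section
/- Let g, s ∈ R^n with g ≠ 0, B ∈ R^{n×n} symmetric with η1 I ⪯ B ⪯ η2 I for 0 < η1 ≤ η2, P = [−g s], u = (α, β) a solution of Pᵀ B P u = −Pᵀ g, and d = −α g + β s. Then ‖d‖ ≥ (1/η2)‖g‖. -/
/-!
The first row of the reduced system says `g ⬝ᵥ B d = -‖g‖²`. Cauchy–Schwarz for the
positive semidefinite form `B` then gives `‖g‖⁴ ≤ (gᵀBg)(dᵀBd) ≤ η₂² ‖g‖² ‖d‖²`.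
-/

open Matrix

section

variable {ι K : Type*} [Fintype ι] [Field K] [LinearOrder K] [IsStrictOrderedRing K]

theorem dotProduct_self_nonneg (v : ι → K) : 0 ≤ v ⬝ᵥ v :=
  Finset.sum_nonneg fun i _ => mul_self_nonneg (v i)

theorem Matrix.IsSymm.sq_dotProduct_mulVec_le {B : Matrix ι ι K} (hB : B.IsSymm)
    (hpos : ∀ x, 0 ≤ x ⬝ᵥ (B *ᵥ x)) (x y : ι → K) :
    (x ⬝ᵥ (B *ᵥ y)) ^ 2 ≤ (x ⬝ᵥ (B *ᵥ x)) * (y ⬝ᵥ (B *ᵥ y)) := by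
  have hyx : y ⬝ᵥ (B *ᵥ x) = x ⬝ᵥ (B *ᵥ y) := by
    simpa only [hB.eq] using dotProduct_transpose_mulVec B y x
  have hquad : ∀ t : K, 0 ≤ (y ⬝ᵥ (B *ᵥ y)) * (t * t) + 2 * (x ⬝ᵥ (B *ᵥ y)) * t
      + x ⬝ᵥ (B *ᵥ x) := fun t => by
    convert hpos (x + t • y) using 1
    simp only [mulVec_add, mulVec_smul, add_dotProduct, dotProduct_add, smul_dotProduct,
      dotProduct_smul, smul_eq_mul, hyx]
    ring
  have hdisc := discrim_le_zero hquad
  rw [discrim] at hdisc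
  nlinarith

theorem dotProduct_self_le_sq_mul_of_dotProduct_mulVec_eq_neg {B : Matrix ι ι K} (hB : B.IsSymm)
    (hpos : ∀ x, 0 ≤ x ⬝ᵥ (B *ᵥ x)) {η : K} (hle : ∀ x, x ⬝ᵥ (B *ᵥ x) ≤ η * (x ⬝ᵥ x))
    {g d : ι → K} (hgd : g ⬝ᵥ (B *ᵥ d) = -(g ⬝ᵥ g)) :
    g ⬝ᵥ g ≤ η ^ 2 * (d ⬝ᵥ d) := by
  have hcs : (g ⬝ᵥ g) * (g ⬝ᵥ g) ≤ (g ⬝ᵥ g) * (η ^ 2 * (d ⬝ᵥ d)) :=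
    calc (g ⬝ᵥ g) * (g ⬝ᵥ g) = (g ⬝ᵥ (B *ᵥ d)) ^ 2 := by rw [hgd, neg_sq, sq]
      _ ≤ (g ⬝ᵥ (B *ᵥ g)) * (d ⬝ᵥ (B *ᵥ d)) := hB.sq_dotProduct_mulVec_le hpos g d
      _ ≤ (η * (g ⬝ᵥ g)) * (η * (d ⬝ᵥ d)) :=
        mul_le_mul (hle g) (hle d) (hpos d) ((hpos g).trans (hle g))
      _ = (g ⬝ᵥ g) * (η ^ 2 * (d ⬝ᵥ d)) := by ring
  rcases (dotProduct_self_nonneg g).eq_or_lt with hg0 | hgpos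
  · rw [← hg0]
    exact mul_nonneg (sq_nonneg η) (dotProduct_self_nonneg d)
  · exact le_of_mul_le_mul_left hcs hgpos

end

theorem mulVec_of_vecCons_neg {ι R : Type*} [CommRing R] (g s : ι → R) (α β : R) :
    (of fun i => ![-g i, s i]) *ᵥ ![α, β] = (-α) • g + β • s := by
  funext i
  simp [mulVec, dotProduct, Fin.sum_univ_two, mul_comm]

section

variable {ι R : Type*} [Fintype ι] [CommRing R]

theorem transpose_of_vecCons_neg_mulVec_zero (g s v : ι → R) :
    ((of fun i => ![-g i, s i])ᵀ *ᵥ v) 0 = -(g ⬝ᵥ v) := by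
  simp [mulVec, dotProduct]

theorem dotProduct_mulVec_eq_neg_of_reduced_system (g s : ι → R) (B : Matrix ι ι R) (α β : R)
    (hu : ((of fun i => ![-g i, s i])ᵀ * B * of fun i => ![-g i, s i]) *ᵥ ![α, β] =
      -((of fun i => ![-g i, s i])ᵀ *ᵥ g)) :
    g ⬝ᵥ (B *ᵥ ((-α) • g + β • s)) = -(g ⬝ᵥ g) := by
  have h0 := congrFun hu 0
  rw [Matrix.mul_assoc, ← mulVec_mulVec, ← mulVec_mulVec, mulVec_of_vecCons_neg,
    Pi.neg_apply, transpose_of_vecCons_neg_mulVec_zero,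
    transpose_of_vecCons_neg_mulVec_zero] at h0
  exact neg_injective (by rw [h0, neg_neg])

end

theorem dir_norm_lower_bound_general
    (n : ℕ) (g s : Fin n → ℝ)
    (η₁ η₂ : ℝ) (hη₁ : 0 < η₁) (hη : η₁ ≤ η₂)
    (B : Matrix (Fin n) (Fin n) ℝ) (hBsymm : B.IsSymm)
    (hB : ∀ x : Fin n → ℝ, η₁ * (x ⬝ᵥ x) ≤ x ⬝ᵥ (B *ᵥ x) ∧ x ⬝ᵥ (B *ᵥ x) ≤ η₂ * (x ⬝ᵥ x))
    (P : Matrix (Fin n) (Fin 2) ℝ) (hP : P = Matrix.of fun i => ![-g i, s i])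
    (α β : ℝ) (hu : (Pᵀ * B * P) *ᵥ ![α, β] = -(Pᵀ *ᵥ g))
    (d : Fin n → ℝ) (hd : d = (-α) • g + β • s) :
    Real.sqrt (d ⬝ᵥ d) ≥ (1/η₂) * Real.sqrt (g ⬝ᵥ g) := by
  have hη₂ : 0 < η₂ := hη₁.trans_le hη
  subst hP
  have hgd : g ⬝ᵥ (B *ᵥ d) = -(g ⬝ᵥ g) :=
    hd ▸ dotProduct_mulVec_eq_neg_of_reduced_system g s B α β hu
  have hpos : ∀ x, 0 ≤ x ⬝ᵥ (B *ᵥ x) := fun x =>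
    (mul_nonneg hη₁.le (dotProduct_self_nonneg x)).trans (hB x).1
  have hnorm_sq :=
    dotProduct_self_le_sq_mul_of_dotProduct_mulVec_eq_neg hBsymm hpos (fun x => (hB x).2) hgd
  rw [ge_iff_le, one_div_mul_eq_div, div_le_iff₀ hη₂]
  calc Real.sqrt (g ⬝ᵥ g) ≤ Real.sqrt (η₂ ^ 2 * (d ⬝ᵥ d)) := Real.sqrt_le_sqrt hnorm_sq
    _ = Real.sqrt (d ⬝ᵥ d) * η₂ := by
      rw [Real.sqrt_mul (sq_nonneg η₂), Real.sqrt_sq hη₂.le, mul_comm]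

theorem dir_norm_lower_bound
    (n : ℕ) (g s : Fin n → ℝ) (hg : g ≠ 0)
    (η₁ η₂ : ℝ) (hη₁ : 0 < η₁) (hη : η₁ ≤ η₂)
    (B : Matrix (Fin n) (Fin n) ℝ) (hBsymm : B.IsSymm)
    (hB : ∀ x : Fin n → ℝ, η₁ * (x ⬝ᵥ x) ≤ x ⬝ᵥ (B *ᵥ x) ∧ x ⬝ᵥ (B *ᵥ x) ≤ η₂ * (x ⬝ᵥ x))
    (P : Matrix (Fin n) (Fin 2) ℝ) (hP : P = Matrix.of fun i => ![-g i, s i])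
    (α β : ℝ) (hu : (Pᵀ * B * P) *ᵥ ![α, β] = -(Pᵀ *ᵥ g))
    (d : Fin n → ℝ) (hd : d = (-α) • g + β • s) :
    Real.sqrt (d ⬝ᵥ d) ≥ (1/η₂) * Real.sqrt (g ⬝ᵥ g) :=
  dir_norm_lower_bound_general n g s η₁ η₂ hη₁ hη B hBsymm hB P hP α β hu d hd
end

section
/- Let g, s ∈ R^n with g ≠ 0, B ∈ R^{n×n} symmetric with η1 I ⪯ B ⪯ η2 I for 0 < η1 ≤ η2, P = [−g s], u = (α, β) a solution of Pᵀ B P u = −Pᵀ g, and d = −α g + β s. Then ‖d‖ ≤ (1/η1)‖g‖. -/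
open Matrix

theorem dir_norm_upper_bound
    (n : ℕ) (g s : Fin n → ℝ) (hg : g ≠ 0)
    (η₁ η₂ : ℝ) (hη₁ : 0 < η₁) (hη : η₁ ≤ η₂)
    (B : Matrix (Fin n) (Fin n) ℝ) (hBsymm : B.IsSymm)
    (hB : ∀ x : Fin n → ℝ, η₁ * (x ⬝ᵥ x) ≤ x ⬝ᵥ (B *ᵥ x) ∧ x ⬝ᵥ (B *ᵥ x) ≤ η₂ * (x ⬝ᵥ x))
    (P : Matrix (Fin n) (Fin 2) ℝ) (hP : P = Matrix.of fun i => ![-g i, s i])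
    (α β : ℝ) (hu : (Pᵀ * B * P) *ᵥ ![α, β] = -(Pᵀ *ᵥ g))
    (d : Fin n → ℝ) (hd : d = (-α) • g + β • s) :
    Real.sqrt (d ⬝ᵥ d) ≤ (1/η₁) * Real.sqrt (g ⬝ᵥ g) := by
  -- d = P *ᵥ u
  have hdP : d = P *ᵥ ![α, β] := by
    funext i
    simp [hd, hP, Matrix.mulVec, dotProduct, Fin.sum_univ_two]
    ring
  -- quadratic form identity
  have hquad : d ⬝ᵥ (B *ᵥ d) = -(d ⬝ᵥ g) := by
    have h1 : d ⬝ᵥ (B *ᵥ d) = ![α, β] ⬝ᵥ ((Pᵀ * B * P) *ᵥ ![α, β]) := by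
      rw [hdP]
      rw [show Pᵀ * B * P = Pᵀ * (B * P) by rw [Matrix.mul_assoc], ← Matrix.mulVec_mulVec,
        ← Matrix.mulVec_mulVec, Matrix.dotProduct_mulVec ![α, β] Pᵀ,
        Matrix.vecMul_transpose]
    rw [h1, hu]
    rw [dotProduct_neg, Matrix.dotProduct_mulVec, Matrix.vecMul_transpose, ← hdP]
  set a := Real.sqrt (d ⬝ᵥ d) with ha
  set b := Real.sqrt (g ⬝ᵥ g) with hb
  have ha0 : 0 ≤ a := Real.sqrt_nonneg _
  have hb0 : 0 ≤ b := Real.sqrt_nonneg _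
  have hdd : d ⬝ᵥ d = a ^ 2 :=
    (Real.sq_sqrt (Finset.sum_nonneg fun i _ => mul_self_nonneg (d i))).symm
  -- Cauchy-Schwarz
  have hcs : -(d ⬝ᵥ g) ≤ a * b := by
    have := Real.sum_mul_le_sqrt_mul_sqrt (Finset.univ) d (fun i => -g i)
    simp only [neg_sq] at this
    calc -(d ⬝ᵥ g) = ∑ i, d i * (-g i) := by
          simp [dotProduct, Finset.mul_sum, ← Finset.sum_neg_distrib]
      _ ≤ a * b := by
          refine this.trans_eq ?_
          rw [ha, hb]
          congr 1 <;> · congr 1; apply Finset.sum_congr rfl; intro i _; ring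
  have hlow : η₁ * a ^ 2 ≤ a * b := by
    calc η₁ * a ^ 2 = η₁ * (d ⬝ᵥ d) := by rw [hdd]
      _ ≤ d ⬝ᵥ (B *ᵥ d) := (hB d).1
      _ = -(d ⬝ᵥ g) := hquad
      _ ≤ a * b := hcs
  rcases eq_or_lt_of_le ha0 with h | h
  · rw [← h]
    positivity
  · rw [one_div, inv_mul_eq_div, le_div_iff₀ hη₁]
    nlinarith
end

section
/- Let g, s ∈ R^n with g ≠ 0 and s ≠ 0, let H ∈ R^{2×2} be symmetric with ĉ1 ≤ λ_min(H) ≤ λ_max(H) ≤ ĉ2 for 0 < ĉ1 ≤ ĉ2, and let (α, β) = H⁻¹ (‖g‖², −gᵀs)ᵀ. Define d = −α g + β s. Then gᵀ d ≤ −(1/ĉ2)‖g‖⁴. -/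
/-!
Put `w = (α, β)` and `v = H w = (‖g‖², -gᵀs)`; then `gᵀd = -wᵀHw`. For a symmetric `H` with
spectrum in `[0, c₂]` one has `‖Hw‖² ≤ c₂ wᵀHw`, since `H(c₂ - H) ⪰ 0`, and `‖Hw‖² ≥ ‖g‖⁴`.
-/

open Matrix

namespace Matrix

variable {ι : Type*} [Fintype ι]

lemma dotProduct_self_nonneg_real (x : ι → ℝ) : 0 ≤ x ⬝ᵥ x :=
  Finset.sum_nonneg fun i _ => mul_self_nonneg (x i)

lemma isUnit_det_of_coercive [DecidableEq ι] {H : Matrix ι ι ℝ} {c : ℝ} (hc : 0 < c)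
    (hH : ∀ x, c * (x ⬝ᵥ x) ≤ x ⬝ᵥ (H *ᵥ x)) : IsUnit H.det := by
  refine isUnit_iff_ne_zero.2 fun hdet => ?_
  obtain ⟨x, hx, hHx⟩ := exists_mulVec_eq_zero_iff.2 hdet
  have hxx : c * (x ⬝ᵥ x) ≤ 0 := by simpa [hHx] using hH x
  exact hx <| dotProduct_self_eq_zero.1 <|
    le_antisymm (nonpos_of_mul_nonpos_right hxx hc) (dotProduct_self_nonneg_real x)

lemma IsSymm.dotProduct_mulVec_comm {H : Matrix ι ι ℝ} (hH : H.IsSymm) (x y : ι → ℝ) :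
    x ⬝ᵥ (H *ᵥ y) = (H *ᵥ x) ⬝ᵥ y := by
  rw [dotProduct_mulVec, ← mulVec_transpose, hH.eq]

lemma IsSymm.mulVec_dotProduct_self_le {H : Matrix ι ι ℝ} (hH : H.IsSymm) {c : ℝ} (hc : 0 < c)
    (hpos : ∀ x, 0 ≤ x ⬝ᵥ (H *ᵥ x)) (hle : ∀ x, x ⬝ᵥ (H *ᵥ x) ≤ c * (x ⬝ᵥ x)) (w : ι → ℝ) :
    (H *ᵥ w) ⬝ᵥ (H *ᵥ w) ≤ c * (w ⬝ᵥ (H *ᵥ w)) := by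
  set v := H *ᵥ w
  have hwv : w ⬝ᵥ (H *ᵥ v) = v ⬝ᵥ v := hH.dotProduct_mulVec_comm w v
  have hz := hpos (c • w - v)
  simp only [mulVec_sub, mulVec_smul, dotProduct_sub, sub_dotProduct, dotProduct_smul,
    smul_dotProduct, smul_eq_mul, hwv] at hz
  have hv := hle v
  have : c * (v ⬝ᵥ v) ≤ c * (c * (w ⬝ᵥ v)) := by linarith
  exact le_of_mul_le_mul_left this hc

end Matrix

theorem H_descent_bound_general
    (n : ℕ) (g s : Fin n → ℝ)
    (c₁ c₂ : ℝ) (hc₁ : 0 < c₁) (hc : c₁ ≤ c₂)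
    (H : Matrix (Fin 2) (Fin 2) ℝ) (hHsymm : H.IsSymm)
    (hH : ∀ x : Fin 2 → ℝ, c₁ * (x ⬝ᵥ x) ≤ x ⬝ᵥ (H *ᵥ x) ∧ x ⬝ᵥ (H *ᵥ x) ≤ c₂ * (x ⬝ᵥ x))
    (α β : ℝ) (hαβ : ![α, β] = H⁻¹ *ᵥ ![g ⬝ᵥ g, -(g ⬝ᵥ s)])
    (d : Fin n → ℝ) (hd : d = (-α) • g + β • s) :
    g ⬝ᵥ d ≤ -(1/c₂) * (g ⬝ᵥ g)^2 := by
  have hc₂ : 0 < c₂ := hc₁.trans_le hc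
  set w : Fin 2 → ℝ := ![α, β]
  have hHw : H *ᵥ w = ![g ⬝ᵥ g, -(g ⬝ᵥ s)] := by
    rw [hαβ, mulVec_mulVec, mul_nonsing_inv H (isUnit_det_of_coercive hc₁ fun x => (hH x).1),
      one_mulVec]
  have hgd : g ⬝ᵥ d = -(w ⬝ᵥ (H *ᵥ w)) := by
    simp only [hd, hHw, w, dotProduct_add, dotProduct_smul, smul_eq_mul, dotProduct_cons,
      head_cons, tail_cons, dotProduct_of_isEmpty, add_zero]
    ring
  have hnorm : (g ⬝ᵥ g) ^ 2 ≤ (H *ᵥ w) ⬝ᵥ (H *ᵥ w) := by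
    simp only [hHw, dotProduct_cons, head_cons, tail_cons, dotProduct_of_isEmpty, add_zero]
    nlinarith [sq_nonneg (g ⬝ᵥ s)]
  have hkey := hHsymm.mulVec_dotProduct_self_le hc₂
    (fun x => (mul_nonneg hc₁.le (dotProduct_self_nonneg_real x)).trans (hH x).1)
    (fun x => (hH x).2) w
  rw [hgd, neg_mul, neg_le_neg_iff, one_div, inv_mul_le_iff₀ hc₂]
  linarith

theorem H_descent_bound
    (n : ℕ) (g s : Fin n → ℝ) (hg : g ≠ 0) (hs : s ≠ 0)
    (c₁ c₂ : ℝ) (hc₁ : 0 < c₁) (hc : c₁ ≤ c₂)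
    (H : Matrix (Fin 2) (Fin 2) ℝ) (hHsymm : H.IsSymm)
    (hH : ∀ x : Fin 2 → ℝ, c₁ * (x ⬝ᵥ x) ≤ x ⬝ᵥ (H *ᵥ x) ∧ x ⬝ᵥ (H *ᵥ x) ≤ c₂ * (x ⬝ᵥ x))
    (α β : ℝ) (hαβ : ![α, β] = H⁻¹ *ᵥ ![g ⬝ᵥ g, -(g ⬝ᵥ s)])
    (d : Fin n → ℝ) (hd : d = (-α) • g + β • s) :
    g ⬝ᵥ d ≤ -(1/c₂) * (g ⬝ᵥ g)^2 :=
  H_descent_bound_general n g s c₁ c₂ hc₁ hc H hHsymm hH α β hαβ d hd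
end

section
/- Let g, s ∈ R^n with g ≠ 0 and s ≠ 0. Let D = diag(‖g‖, ‖s‖) and let H ∈ R^{2×2} be symmetric such that c1 ≤ λ_min(D⁻¹ H D⁻¹) ≤ λ_max(D⁻¹ H D⁻¹) ≤ c2 for 0 < c1 ≤ c2. Let (α, β) solve H(α, β)ᵀ = (‖g‖², −gᵀs)ᵀ and set d = −α g + β s. Then gᵀ d ≤ −(1/c2)‖g‖². -/
open Matrix

private lemma dot_self_nonneg' {k : ℕ} (v : Fin k → ℝ) : 0 ≤ v ⬝ᵥ v :=
  Finset.sum_nonneg fun i _ => mul_self_nonneg (v i)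

private lemma dot_mulVec_left' (A : Matrix (Fin 2) (Fin 2) ℝ) (u v : Fin 2 → ℝ) :
    u ⬝ᵥ (Aᵀ *ᵥ v) = (A *ᵥ u) ⬝ᵥ v := by
  rw [Matrix.dotProduct_mulVec, Matrix.vecMul_transpose]

private lemma dot_symm_swap' (A : Matrix (Fin 2) (Fin 2) ℝ) (hA : Aᵀ = A)
    (u v : Fin 2 → ℝ) : u ⬝ᵥ (A *ᵥ v) = v ⬝ᵥ (A *ᵥ u) := by
  rw [← hA, dot_mulVec_left', hA, dotProduct_comm]

theorem scaled_descent_bound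
    (n : ℕ) (g s : Fin n → ℝ) (hg : g ≠ 0) (hs : s ≠ 0)
    (c₁ c₂ : ℝ) (hc₁ : 0 < c₁) (hc : c₁ ≤ c₂)
    (D : Matrix (Fin 2) (Fin 2) ℝ)
    (hD : D = Matrix.diagonal ![Real.sqrt (g ⬝ᵥ g), Real.sqrt (s ⬝ᵥ s)])
    (H : Matrix (Fin 2) (Fin 2) ℝ) (hHsymm : H.IsSymm)
    (hH : ∀ x : Fin 2 → ℝ, c₁ * (x ⬝ᵥ x) ≤ x ⬝ᵥ ((D⁻¹ * H * D⁻¹) *ᵥ x) ∧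
      x ⬝ᵥ ((D⁻¹ * H * D⁻¹) *ᵥ x) ≤ c₂ * (x ⬝ᵥ x))
    (α β : ℝ) (hαβ : H *ᵥ ![α, β] = ![g ⬝ᵥ g, -(g ⬝ᵥ s)])
    (d : Fin n → ℝ) (hd : d = (-α) • g + β • s) :
    g ⬝ᵥ d ≤ -(1/c₂) * (g ⬝ᵥ g) := by
  have hc₂ : 0 < c₂ := lt_of_lt_of_le hc₁ hc
  have hgg : 0 < g ⬝ᵥ g :=
    lt_of_le_of_ne (dot_self_nonneg' _)
      (fun h => hg (dotProduct_self_eq_zero.mp h.symm))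
  have hss : 0 < s ⬝ᵥ s :=
    lt_of_le_of_ne (dot_self_nonneg' _)
      (fun h => hs (dotProduct_self_eq_zero.mp h.symm))
  set a := Real.sqrt (g ⬝ᵥ g) with ha
  set b := Real.sqrt (s ⬝ᵥ s) with hb
  have ha0 : 0 < a := Real.sqrt_pos.mpr hgg
  have hb0 : 0 < b := Real.sqrt_pos.mpr hss
  have ha2 : a * a = g ⬝ᵥ g := Real.mul_self_sqrt hgg.le
  set E : Matrix (Fin 2) (Fin 2) ℝ := Matrix.diagonal ![a⁻¹, b⁻¹] with hE
  have hDE : D * E = 1 := by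
    ext i j
    fin_cases i <;> fin_cases j <;>
      simp [hD, hE, Matrix.mul_apply, Fin.sum_univ_two, Matrix.diagonal, Matrix.one_apply,
        mul_inv_cancel₀ ha0.ne', mul_inv_cancel₀ hb0.ne']
  have hED : E * D = 1 := by
    ext i j
    fin_cases i <;> fin_cases j <;>
      simp [hD, hE, Matrix.mul_apply, Fin.sum_univ_two, Matrix.diagonal, Matrix.one_apply,
        inv_mul_cancel₀ ha0.ne', inv_mul_cancel₀ hb0.ne']
  have hDinv : D⁻¹ = E := Matrix.inv_eq_right_inv hDE
  have hDsymm : Dᵀ = D := by rw [hD, Matrix.diagonal_transpose]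
  have hEsymm : Eᵀ = E := by rw [hE, Matrix.diagonal_transpose]
  set M : Matrix (Fin 2) (Fin 2) ℝ := D⁻¹ * H * D⁻¹ with hM
  have hMsymm : Mᵀ = M := by
    rw [hM, hDinv, Matrix.transpose_mul, Matrix.transpose_mul, hEsymm, hHsymm.eq,
      Matrix.mul_assoc]
  set x : Fin 2 → ℝ := ![α, β] with hx
  set y : Fin 2 → ℝ := D *ᵥ x with hy
  set z : Fin 2 → ℝ := M *ᵥ y with hz
  -- z = E *ᵥ (H *ᵥ x)
  have hzE : z = E *ᵥ ![g ⬝ᵥ g, -(g ⬝ᵥ s)] := by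
    rw [hz, hy, Matrix.mulVec_mulVec, hM, hDinv, Matrix.mul_assoc, Matrix.mul_assoc, hED,
      Matrix.mul_one, ← Matrix.mulVec_mulVec, hαβ]
  have hz0 : z 0 = a := by
    have : z 0 = a⁻¹ * (g ⬝ᵥ g) := by
      rw [hzE]; simp [hE, Matrix.mulVec_diagonal]
    rw [this, ← ha2]
    field_simp
  have hzz : g ⬝ᵥ g ≤ z ⬝ᵥ z := by
    have hzzeq : z ⬝ᵥ z = z 0 * z 0 + z 1 * z 1 := by
      simp [dotProduct, Fin.sum_univ_two]
    rw [hzzeq, hz0, ha2]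
    nlinarith [sq_nonneg (z 1)]
  -- y ⬝ᵥ z = x ⬝ᵥ (H *ᵥ x)
  have hkey : y ⬝ᵥ z = x ⬝ᵥ (H *ᵥ x) := by
    calc y ⬝ᵥ z = (D *ᵥ x) ⬝ᵥ z := by rw [hy]
    _ = x ⬝ᵥ (Dᵀ *ᵥ z) := (dot_mulVec_left' D x z).symm
    _ = x ⬝ᵥ (D *ᵥ (E *ᵥ (H *ᵥ x))) := by rw [hDsymm, hzE, hαβ]
    _ = x ⬝ᵥ ((D * E) *ᵥ (H *ᵥ x)) := by rw [Matrix.mulVec_mulVec]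
    _ = x ⬝ᵥ (H *ᵥ x) := by rw [hDE, Matrix.one_mulVec]
  -- the quadratic form inequality: (1/c₂) * (z ⬝ᵥ z) ≤ y ⬝ᵥ z
  have hMyz : y ⬝ᵥ (M *ᵥ z) = z ⬝ᵥ z := by
    rw [dot_symm_swap' M hMsymm, ← hz]
  have hzMy : z ⬝ᵥ (M *ᵥ y) = z ⬝ᵥ z := by rw [← hz]
  have hyMy : y ⬝ᵥ (M *ᵥ y) = y ⬝ᵥ z := by rw [← hz]
  have hquad : (1/c₂) * (z ⬝ᵥ z) ≤ y ⬝ᵥ z := by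
    set t : ℝ := 1/c₂ with ht
    set u : Fin 2 → ℝ := y - t • z with hu
    have h1 := (hH u).1
    have h2 := (hH z).2
    have hunn : (0:ℝ) ≤ u ⬝ᵥ u := dot_self_nonneg' _
    have hexp : u ⬝ᵥ (M *ᵥ u) =
        y ⬝ᵥ (M *ᵥ y) - t * (y ⬝ᵥ (M *ᵥ z)) - t * (z ⬝ᵥ (M *ᵥ y)) + t * t * (z ⬝ᵥ (M *ᵥ z)) := by
      rw [hu, Matrix.mulVec_sub, Matrix.mulVec_smul, sub_dotProduct,
        dotProduct_sub, dotProduct_sub, smul_dotProduct,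
        dotProduct_smul, dotProduct_smul]
      simp only [smul_dotProduct, dotProduct_smul, smul_eq_mul, smul_smul]
      ring
    have h1' : 0 ≤ u ⬝ᵥ (M *ᵥ u) :=
      le_trans (by positivity) h1
    rw [hexp, hyMy, hMyz, hzMy] at h1'
    have htc : t * t * c₂ = t := by
      rw [ht]; field_simp
    nlinarith [mul_le_mul_of_nonneg_left h2 (mul_self_nonneg t)]
  -- putting it together
  have hgd : g ⬝ᵥ d = -(x ⬝ᵥ (H *ᵥ x)) := by
    have h1 : g ⬝ᵥ d = -α * (g ⬝ᵥ g) + β * (g ⬝ᵥ s) := by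
      rw [hd, dotProduct_add, dotProduct_smul, dotProduct_smul,
        smul_eq_mul, smul_eq_mul]
    have h2 : x ⬝ᵥ (H *ᵥ x) = α * (g ⬝ᵥ g) + β * (-(g ⬝ᵥ s)) := by
      rw [hαβ, hx]
      simp [dotProduct, Fin.sum_univ_two]
    rw [h1, h2]; ring
  rw [hgd, ← hkey]
  have h2 : (1/c₂) * (g ⬝ᵥ g) ≤ (1/c₂) * (z ⬝ᵥ z) :=
    mul_le_mul_of_nonneg_left hzz (by positivity)
  linarith
end

section
/- In the same setting (g, s nonzero, D = diag(‖g‖,‖s‖), H symmetric 2×2 with c1 I ⪯ D⁻¹HD⁻¹ ⪯ c2 I, (α,β) solving H(α,β)ᵀ = (‖g‖², −gᵀs)ᵀ, d = −αg + βs), one has ‖d‖ ≤ (2/c1)‖g‖. -/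
open Matrix

/-! Testing the lower bound `c₁ I ⪯ D⁻¹HD⁻¹` on `x = D (α, β)ᵀ` cancels the scalings and gives
`c₁ (α²‖g‖² + β²‖s‖²) ≤ (α, β) H (α, β)ᵀ = α‖g‖² - β gᵀs = -gᵀd`. Since
`‖d‖² ≤ 2 (α²‖g‖² + β²‖s‖²)`, Cauchy–Schwarz yields `(c₁/2) ‖d‖² ≤ -gᵀd ≤ ‖g‖ ‖d‖`;
divide by `‖d‖`. -/

section DotProduct

variable {ι : Type*} [Fintype ι]

lemma dotProduct_le_sqrt_mul_sqrt (u v : ι → ℝ) :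
    u ⬝ᵥ v ≤ √(u ⬝ᵥ u) * √(v ⬝ᵥ v) := by
  simpa only [dotProduct, pow_two] using Real.sum_mul_le_sqrt_mul_sqrt Finset.univ u v

lemma dotProduct_self_smul_add_smul_le {R : Type*} [CommRing R] [LinearOrder R]
    [IsStrictOrderedRing R] (a b : R) (u v : ι → R) :
    (a • u + b • v) ⬝ᵥ (a • u + b • v) ≤ 2 * (a ^ 2 * (u ⬝ᵥ u) + b ^ 2 * (v ⬝ᵥ v)) := by
  have hsub : 0 ≤ (a • u - b • v) ⬝ᵥ (a • u - b • v) :=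
    Fintype.sum_nonneg fun _ => mul_self_nonneg _
  simp only [add_dotProduct, dotProduct_add, sub_dotProduct, dotProduct_sub, smul_dotProduct,
    dotProduct_smul, smul_eq_mul, dotProduct_comm v u] at hsub ⊢
  linarith

lemma dotProduct_conj_inv_mulVec_mulVec {K : Type*} [Field K] [DecidableEq ι]
    {D : Matrix ι ι K} (hDT : Dᵀ = D) (hD : IsUnit D.det) (H : Matrix ι ι K) (v : ι → K) :
    (D *ᵥ v) ⬝ᵥ ((D⁻¹ * H * D⁻¹) *ᵥ (D *ᵥ v)) = v ⬝ᵥ (H *ᵥ v) := by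
  rw [mulVec_mulVec, Matrix.mul_assoc, nonsing_inv_mul D hD, Matrix.mul_one, ← mulVec_mulVec,
    dotProduct_mulVec, ← vecMul_transpose, hDT, vecMul_vecMul, mul_nonsing_inv D hD, vecMul_one]

end DotProduct

lemma diagonal_sqrt_mulVec_dotProduct_self {x y : ℝ} (hx : 0 ≤ x) (hy : 0 ≤ y) (a b : ℝ) :
    (diagonal ![√x, √y] *ᵥ ![a, b]) ⬝ᵥ (diagonal ![√x, √y] *ᵥ ![a, b]) = a ^ 2 * x + b ^ 2 * y := by
  have hmulVec : diagonal ![√x, √y] *ᵥ ![a, b] = ![√x * a, √y * b] := by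
    ext i; fin_cases i <;> simp
  simp only [hmulVec, cons_dotProduct_cons, dotProduct_of_isEmpty, add_zero]
  rw [mul_mul_mul_comm, Real.mul_self_sqrt hx, mul_mul_mul_comm, Real.mul_self_sqrt hy]
  ring

lemma le_div_of_mul_mul_self_le {c a t : ℝ} (hc : 0 < c) (ha : 0 ≤ a) (ht : 0 ≤ t)
    (h : c * t * t ≤ a * t) : t ≤ a / c := by
  rw [le_div_iff₀ hc]
  rcases ht.eq_or_lt with rfl | ht
  · simpa using ha
  · nlinarith

theorem scaled_norm_upper_bound_general
    (n : ℕ) (g s : Fin n → ℝ) (hg : g ≠ 0) (hs : s ≠ 0)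
    (c₁ c₂ : ℝ) (hc₁ : 0 < c₁)
    (D : Matrix (Fin 2) (Fin 2) ℝ)
    (hD : D = Matrix.diagonal ![Real.sqrt (g ⬝ᵥ g), Real.sqrt (s ⬝ᵥ s)])
    (H : Matrix (Fin 2) (Fin 2) ℝ)
    (hH : ∀ x : Fin 2 → ℝ, c₁ * (x ⬝ᵥ x) ≤ x ⬝ᵥ ((D⁻¹ * H * D⁻¹) *ᵥ x) ∧
      x ⬝ᵥ ((D⁻¹ * H * D⁻¹) *ᵥ x) ≤ c₂ * (x ⬝ᵥ x))
    (α β : ℝ) (hαβ : H *ᵥ ![α, β] = ![g ⬝ᵥ g, -(g ⬝ᵥ s)])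
    (d : Fin n → ℝ) (hd : d = (-α) • g + β • s) :
    Real.sqrt (d ⬝ᵥ d) ≤ (2/c₁) * Real.sqrt (g ⬝ᵥ g) := by
  have hG : 0 < g ⬝ᵥ g := by simpa using dotProduct_self_star_pos_iff.mpr hg
  have hS : 0 < s ⬝ᵥ s := by simpa using dotProduct_self_star_pos_iff.mpr hs
  have hDunit : IsUnit D.det := by
    rw [hD, det_diagonal, Fin.prod_univ_two]
    exact (mul_pos (Real.sqrt_pos.mpr hG) (Real.sqrt_pos.mpr hS)).ne'.isUnit
  have hrhs : ![α, β] ⬝ᵥ ![g ⬝ᵥ g, -(g ⬝ᵥ s)] = -(g ⬝ᵥ d) := by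
    simp only [hd, cons_dotProduct_cons, dotProduct_of_isEmpty, add_zero, dotProduct_add,
      dotProduct_smul, smul_eq_mul]
    ring
  have hcoercive : c₁ * (α ^ 2 * (g ⬝ᵥ g) + β ^ 2 * (s ⬝ᵥ s)) ≤ -(g ⬝ᵥ d) := by
    have h := (hH (D *ᵥ ![α, β])).1
    rwa [dotProduct_conj_inv_mulVec_mulVec (by rw [hD, diagonal_transpose]) hDunit, hαβ, hrhs,
      hD, diagonal_sqrt_mulVec_dotProduct_self hG.le hS.le] at h
  have hsplit : d ⬝ᵥ d ≤ 2 * (α ^ 2 * (g ⬝ᵥ g) + β ^ 2 * (s ⬝ᵥ s)) := by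
    simpa only [hd, neg_sq] using dotProduct_self_smul_add_smul_le (-α) β g s
  have hcs : -(g ⬝ᵥ d) ≤ √(g ⬝ᵥ g) * √(d ⬝ᵥ d) := by
    simpa only [neg_dotProduct, dotProduct_neg, neg_neg] using dotProduct_le_sqrt_mul_sqrt (-g) d
  rw [div_mul_eq_mul_div]
  apply le_div_of_mul_mul_self_le hc₁ (by positivity) (Real.sqrt_nonneg _)
  rw [mul_assoc, Real.mul_self_sqrt (by simpa using dotProduct_self_star_nonneg d)]
  nlinarith [mul_le_mul_of_nonneg_left hsplit hc₁.le]

theorem scaled_norm_upper_bound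
    (n : ℕ) (g s : Fin n → ℝ) (hg : g ≠ 0) (hs : s ≠ 0)
    (c₁ c₂ : ℝ) (hc₁ : 0 < c₁) (hc : c₁ ≤ c₂)
    (D : Matrix (Fin 2) (Fin 2) ℝ)
    (hD : D = Matrix.diagonal ![Real.sqrt (g ⬝ᵥ g), Real.sqrt (s ⬝ᵥ s)])
    (H : Matrix (Fin 2) (Fin 2) ℝ) (hHsymm : H.IsSymm)
    (hH : ∀ x : Fin 2 → ℝ, c₁ * (x ⬝ᵥ x) ≤ x ⬝ᵥ ((D⁻¹ * H * D⁻¹) *ᵥ x) ∧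
      x ⬝ᵥ ((D⁻¹ * H * D⁻¹) *ᵥ x) ≤ c₂ * (x ⬝ᵥ x))
    (α β : ℝ) (hαβ : H *ᵥ ![α, β] = ![g ⬝ᵥ g, -(g ⬝ᵥ s)])
    (d : Fin n → ℝ) (hd : d = (-α) • g + β • s) :
    Real.sqrt (d ⬝ᵥ d) ≤ (2/c₁) * Real.sqrt (g ⬝ᵥ g) :=
  scaled_norm_upper_bound_general n g s hg hs c₁ c₂ hc₁ D hD H hH α β hαβ d hd
end
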